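/- Lower bound for the modified Carleman weight: define, for parameters τ ≥ τ1 > 0 and ε > 0, φ'_ε(t) := h'_ε(t) − 1/2 + h''_ε(t)/(4(1 + h'_ε(t))) + (h'_ε(t) − h''_ε(t))·e^{−t}/(4(1 + e^{−t} h'_ε(t))). Then there exists a universal ε0 ∈ (0,1] such that for every τ1 > 0 there exists τ̄ > 0 with the property that for all τ ≥ τ̄, all ε ∈ (0, ε0], and all t ≥ 0, one has φ'_ε(t) > τ1 − 1/2. -/

import Mathlib

open MeasureTheory Filter
open scoped ENNReal Topology BigOperators

noncomputable section

/-- The derivative `h'_ε` of the Carleman weight: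
`h'_ε(t) = τ1 + (τ e^{t/2} - τ1)·τ²/(τ² + ε e^t)`. -/
def hep (τ1 τ ε t : ℝ) : ℝ :=
  τ1 + (τ * Real.exp (t / 2) - τ1) * τ ^ 2 / (τ ^ 2 + ε * Real.exp t)

/-- The Carleman weight `h_ε(t) = ∫_0^t h'_ε(s) ds`. -/
def he (τ1 τ ε t : ℝ) : ℝ := ∫ s in (0 : ℝ)..t, hep τ1 τ ε s

/-- The second derivative `h''_ε = (h'_ε)'`. -/
def hepp (τ1 τ ε : ℝ) : ℝ → ℝ := deriv (hep τ1 τ ε)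

/-- The derivative `φ'_ε` of the modified Carleman weight. -/
def phip (τ1 τ ε t : ℝ) : ℝ :=
  hep τ1 τ ε t - 1 / 2 + hepp τ1 τ ε t / (4 * (1 + hep τ1 τ ε t))
    + (hep τ1 τ ε t - hepp τ1 τ ε t) * Real.exp (-t)
        / (4 * (1 + Real.exp (-t) * hep τ1 τ ε t))

/-!
Once `τ e^{t/2} ≥ 2τ1`, both `h'_ε - τ1 + h''_ε` and `h'_ε - τ1 - h''_ε` are sums of nonnegative
terms, so `|h''_ε| ≤ h'_ε - τ1`. Then the term `h''_ε / (4(1 + h'_ε))` costs at most `(h'_ε - τ1)/4`,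
while the last term of `φ'_ε` is positive because `h'_ε - h''_ε ≥ τ1 > 0`; this gives
`φ'_ε > (3h'_ε + τ1)/4 - 1/2 ≥ τ1 - 1/2`, for every `ε > 0` and `τ ≥ 2τ1`.
-/

lemma sub_half_lt_of_abs_le_sub {τ1 x y s : ℝ} (hτ1 : 0 < τ1) (hy : |y| ≤ x - τ1) (hs : 0 < s) :
    τ1 - 1 / 2 < x - 1 / 2 + y / (4 * (1 + x)) + (x - y) * s / (4 * (1 + s * x)) := by
  obtain ⟨hy_lower, hy_upper⟩ := abs_le.mp hy
  have hx : τ1 ≤ x := by linarith [abs_nonneg y]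
  have hmiddle : -(x - τ1) / 4 ≤ y / (4 * (1 + x)) :=
    calc -(x - τ1) / 4 ≤ -(x - τ1) / (4 * (1 + x)) := by
          rw [neg_div, neg_div, neg_le_neg_iff]
          gcongr
          linarith
      _ ≤ y / (4 * (1 + x)) := by gcongr; linarith
  have hlast : 0 < (x - y) * s / (4 * (1 + s * x)) := by
    have : 0 < s * x := mul_pos hs (by linarith)
    exact div_pos (mul_pos (by linarith) hs) (by linarith)
  linarith

section Weight

variable {τ1 τ ε : ℝ}

lemma hep_sub_eq (t : ℝ) :
    hep τ1 τ ε t - τ1 =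
      (τ * Real.exp (t / 2) - τ1) * τ ^ 2 / (τ ^ 2 + ε * Real.exp t) := by
  rw [hep]; ring

lemma hasDerivAt_hep (hε : 0 < ε) (t : ℝ) :
    HasDerivAt (hep τ1 τ ε)
      (τ ^ 3 * Real.exp (t / 2) / (2 * (τ ^ 2 + ε * Real.exp t))
        - (τ * Real.exp (t / 2) - τ1) * τ ^ 2 * (ε * Real.exp t)
          / (τ ^ 2 + ε * Real.exp t) ^ 2) t := by
  have hD : τ ^ 2 + ε * Real.exp t ≠ 0 := by positivity
  have hexp_half : HasDerivAt (fun s ↦ Real.exp (s / 2)) (Real.exp (t / 2) * (1 / 2)) t := by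
    simpa [Function.comp_def] using
      (Real.hasDerivAt_exp (t / 2)).comp t ((hasDerivAt_id t).div_const 2)
  have hnum := ((hexp_half.const_mul τ).sub_const τ1).mul_const (τ ^ 2)
  have hden := ((Real.hasDerivAt_exp t).const_mul ε).const_add (τ ^ 2)
  refine ((hnum.div hden hD).const_add τ1).congr_deriv ?_
  field_simp

lemma hepp_eq (hε : 0 < ε) (t : ℝ) :
    hepp τ1 τ ε t =
      τ ^ 3 * Real.exp (t / 2) / (2 * (τ ^ 2 + ε * Real.exp t))
        - (τ * Real.exp (t / 2) - τ1) * τ ^ 2 * (ε * Real.exp t)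
          / (τ ^ 2 + ε * Real.exp t) ^ 2 :=
  (hasDerivAt_hep hε t).deriv

lemma abs_hepp_le_hep_sub (hτ1 : 0 ≤ τ1) (hτ : 2 * τ1 ≤ τ) (hε : 0 < ε) {t : ℝ} (ht : 0 ≤ t) :
    |hepp τ1 τ ε t| ≤ hep τ1 τ ε t - τ1 := by
  rw [abs_le, hepp_eq hε, hep_sub_eq]
  set a := Real.exp (t / 2)
  set D := τ ^ 2 + ε * Real.exp t
  have hD : 0 < D := by positivity
  have hτa : 2 * τ1 ≤ τ * a := by nlinarith [Real.one_le_exp (by linarith : 0 ≤ t / 2)]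
  have hτ_nonneg : 0 ≤ τ := by linarith
  have hτa_half : 0 ≤ τ * a / 2 - τ1 := by linarith
  have hτa_sub : 0 ≤ τ * a - τ1 := by linarith
  constructor
  · have hsum : (τ * a - τ1) * τ ^ 2 / D
          + (τ ^ 3 * a / (2 * D) - (τ * a - τ1) * τ ^ 2 * (ε * Real.exp t) / D ^ 2)
        = τ ^ 3 * a / (2 * D) + (τ * a - τ1) * τ ^ 4 / D ^ 2 := by
      field_simp
      ring
    have : 0 ≤ τ ^ 3 * a / (2 * D) + (τ * a - τ1) * τ ^ 4 / D ^ 2 := by positivity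
    linarith
  · have hdiff : (τ * a - τ1) * τ ^ 2 / D
          - (τ ^ 3 * a / (2 * D) - (τ * a - τ1) * τ ^ 2 * (ε * Real.exp t) / D ^ 2)
        = τ ^ 2 * (τ * a / 2 - τ1) / D + (τ * a - τ1) * τ ^ 2 * (ε * Real.exp t) / D ^ 2 := by
      field_simp
      ring
    have : 0 ≤ τ ^ 2 * (τ * a / 2 - τ1) / D
        + (τ * a - τ1) * τ ^ 2 * (ε * Real.exp t) / D ^ 2 := by positivity
    linarith

end Weight

/-- Lower bound for the modified Carleman weight: there is a universal
`ε0 ∈ (0,1]` so that for every `τ1 > 0` and all sufficiently large `τ`,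
all `ε ∈ (0, ε0]` and all `t ≥ 0` one has `φ'_ε(t) > τ1 - 1/2`. -/
theorem modified_weight_lower_bound :
    ∃ ε0 : ℝ, 0 < ε0 ∧ ε0 ≤ 1 ∧
      ∀ τ1 : ℝ, 0 < τ1 →
        ∃ τbar : ℝ, 0 < τbar ∧
          ∀ τ : ℝ, τbar ≤ τ →
            ∀ ε : ℝ, 0 < ε → ε ≤ ε0 →
              ∀ t : ℝ, 0 ≤ t → τ1 - 1 / 2 < phip τ1 τ ε t := by
  refine ⟨1, one_pos, le_rfl, fun τ1 hτ1 ↦ ⟨2 * τ1, by positivity, fun τ hτ ε hε _ t ht ↦ ?_⟩⟩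
  rw [phip]
  exact sub_half_lt_of_abs_le_sub hτ1 (abs_hepp_le_hep_sub hτ1.le hτ hε ht) (Real.exp_pos (-t))

end
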